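/- Let S = (N, D) be a finite linear space, i.e., N is a finite set of points and D is a collection of subsets of N (called lines) such that every line contains at least two points and any two distinct points of N lie on exactly one common line. Let v = |N| and b = |D|, and suppose b > 1 and b = v. Then exactly one of the following holds: either there is a line containing exactly v − 1 points and every other line contains exactly 2 points, or there exists an integer k ≥ 2 such that every line contains exactly k + 1 points and every point lies on exactly k + 1 lines. -/

import Mathlib

/-!
When there are as many lines as points, Mathlib's theory of configurations shows that any two lines
meet and that a point off a line `ℓ` lies on exactly `|ℓ|` lines. If two lines `ℓ`, `m` have
different sizes, every point therefore lies on `ℓ` or `m`; a line joining a point of `ℓ \ m` to one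
of `m \ ℓ` has then only two points, and counting the lines through a further point of `m \ ℓ`
forces `|m| = 2`: a near-pencil. If all lines have `k + 1` points, then `k ≥ 2` gives a projective
plane of order `k`, while `k = 1` forces `v = 3`, a triangle. A near-pencil has a line of two
points, so the cases exclude each other.
-/

open Finset

structure IsLinearSpace {α : Type*} (N : Finset α) (D : Finset (Finset α)) : Prop where
  subset : ∀ ℓ ∈ D, ℓ ⊆ N
  two_le_card : ∀ ℓ ∈ D, 2 ≤ #ℓ
  existsUnique_line : ∀ p ∈ N, ∀ q ∈ N, p ≠ q → ∃! ℓ, ℓ ∈ D ∧ p ∈ ℓ ∧ q ∈ ℓ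

def IsNearPencil {α : Type*} (N : Finset α) (D : Finset (Finset α)) : Prop :=
  ∃ ℓ ∈ D, #ℓ = #N - 1 ∧ ∀ ℓ' ∈ D, ℓ' ≠ ℓ → #ℓ' = 2

/-- Projective planes described by their line sizes and point degrees rather than by axioms. -/
def IsProjectivePlaneOfOrder {α : Type*} [DecidableEq α] (N : Finset α) (D : Finset (Finset α))
    (k : ℕ) : Prop :=
  2 ≤ k ∧ (∀ ℓ ∈ D, #ℓ = k + 1) ∧ ∀ p ∈ N, #(D.filter (p ∈ ·)) = k + 1

theorem IsNearPencil.not_isProjectivePlaneOfOrder {α : Type*} [DecidableEq α] {N : Finset α}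
    {D : Finset (Finset α)} {k : ℕ} (h : IsNearPencil N D) (hD : 1 < #D) :
    ¬IsProjectivePlaneOfOrder N D k := by
  rintro ⟨hk, hcard, -⟩
  obtain ⟨ℓ, -, -, htwo⟩ := h
  obtain ⟨m, hm, hmℓ⟩ := D.exists_mem_ne hD ℓ
  have := hcard m hm
  have := htwo m hm hmℓ
  omega

namespace IsLinearSpace

section

variable {α : Type*} {N : Finset α} {D : Finset (Finset α)}

theorem eq_of_mem_of_mem (hS : IsLinearSpace N D) {ℓ m : Finset α} {p q : α} (hℓ : ℓ ∈ D)
    (hm : m ∈ D) (hpℓ : p ∈ ℓ) (hqℓ : q ∈ ℓ) (hpm : p ∈ m) (hqm : q ∈ m) (hpq : p ≠ q) :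
    ℓ = m :=
  (hS.existsUnique_line p (hS.subset ℓ hℓ hpℓ) q (hS.subset ℓ hℓ hqℓ) hpq).unique
    ⟨hℓ, hpℓ, hqℓ⟩ ⟨hm, hpm, hqm⟩

theorem exists_point_notMem (hS : IsLinearSpace N D) (hD : 1 < #D) {ℓ : Finset α}
    (hℓ : ℓ ∈ D) : ∃ p ∈ N, p ∉ ℓ := by
  classical
  obtain ⟨m, hm, hmℓ⟩ := D.exists_mem_ne hD ℓ
  obtain ⟨p, hp, q, hq, hpq⟩ := one_lt_card.1 (hS.two_le_card m hm)
  by_contra! hN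
  exact hmℓ (hS.eq_of_mem_of_mem hm hℓ hp hq (hN p (hS.subset m hm hp))
    (hN q (hS.subset m hm hq)) hpq)

/-- The point set is a parameter so that incidence of points of `N` with lines of `D` can be an
instance. -/
def Lines (_N : Finset α) (D : Finset (Finset α)) : Type _ := {ℓ // ℓ ∈ D}

instance : Membership N (Lines N D) := ⟨fun ℓ p => p.1 ∈ ℓ.1⟩

instance : Fintype (Lines N D) := inferInstanceAs (Fintype {ℓ // ℓ ∈ D})

theorem card_lines : Fintype.card (Lines N D) = #D := Fintype.card_coe D

theorem pointCount_eq (hS : IsLinearSpace N D) (ℓ : Lines N D) :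
    Configuration.pointCount N ℓ = #ℓ.1 :=
  (Nat.card_congr (Equiv.subtypeSubtypeEquivSubtypeInter (· ∈ N) (· ∈ ℓ.1))).trans
    (Nat.subtype_card _ fun _ => ⟨fun h => ⟨hS.subset ℓ.1 ℓ.2 h, h⟩, And.right⟩)

end

variable {α : Type*} [DecidableEq α] {N : Finset α} {D : Finset (Finset α)}

theorem card_inter_le_one (hS : IsLinearSpace N D) {ℓ m : Finset α} (hℓ : ℓ ∈ D) (hm : m ∈ D)
    (hℓm : ℓ ≠ m) : #(ℓ ∩ m) ≤ 1 :=
  card_le_one.2 fun _ hp _ hq => by_contra fun hpq => hℓm <| hS.eq_of_mem_of_mem hℓ hm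
    (mem_inter.1 hp).1 (mem_inter.1 hq).1 (mem_inter.1 hp).2 (mem_inter.1 hq).2 hpq

theorem card_sub_one_le_card_sdiff (hS : IsLinearSpace N D) {ℓ m : Finset α} (hℓ : ℓ ∈ D)
    (hm : m ∈ D) (hℓm : ℓ ≠ m) : #ℓ - 1 ≤ #(ℓ \ m) := by
  rw [card_sdiff]
  have := hS.card_inter_le_one hm hℓ hℓm.symm
  omega

theorem card_filter_mem_le_card_erase (hS : IsLinearSpace N D) (p : α) :
    #(D.filter (p ∈ ·)) ≤ #(N.erase p) := by
  refine card_le_card_of_forall_subsingleton (fun ℓ q => q ∈ ℓ) (fun ℓ hℓ => ?_)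
    fun q hq => ?_
  · obtain ⟨hℓ, hpℓ⟩ := mem_filter.1 hℓ
    obtain ⟨q, hqℓ, hqp⟩ := ℓ.exists_mem_ne (hS.two_le_card ℓ hℓ) p
    exact ⟨q, mem_erase.2 ⟨hqp, hS.subset ℓ hℓ hqℓ⟩, hqℓ⟩
  · rintro ℓ ⟨hℓ, hqℓ⟩ m ⟨hm, hqm⟩
    rw [mem_filter] at hℓ hm
    exact hS.eq_of_mem_of_mem hℓ.1 hm.1 hℓ.2 hqℓ hm.2 hqm (ne_of_mem_erase hq).symm

theorem card_erase_le_sum_card_sub_one (hS : IsLinearSpace N D) {p : α} (hp : p ∈ N) :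
    #(N.erase p) ≤ ∑ ℓ ∈ D.filter (p ∈ ·), (#ℓ - 1) := by
  calc #(N.erase p) ≤ #((D.filter (p ∈ ·)).biUnion (·.erase p)) := card_le_card fun q hq => ?_
    _ ≤ ∑ ℓ ∈ D.filter (p ∈ ·), #(ℓ.erase p) := card_biUnion_le
    _ = ∑ ℓ ∈ D.filter (p ∈ ·), (#ℓ - 1) :=
      sum_congr rfl fun ℓ hℓ => card_erase_of_mem (mem_filter.1 hℓ).2
  obtain ⟨hqp, hq⟩ := mem_erase.1 hq
  obtain ⟨ℓ, ⟨hℓ, hpℓ, hqℓ⟩, -⟩ := hS.existsUnique_line p hp q hq (Ne.symm hqp)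
  exact mem_biUnion.2 ⟨ℓ, mem_filter.2 ⟨hℓ, hpℓ⟩, mem_erase.2 ⟨hqp, hqℓ⟩⟩

theorem exists_line_notMem (hS : IsLinearSpace N D) (hND : #N ≤ #D) {p : α} (hp : p ∈ N) :
    ∃ ℓ ∈ D, p ∉ ℓ := by
  by_contra! hD
  have hle := hS.card_filter_mem_le_card_erase p
  rw [filter_true_of_mem hD, card_erase_of_mem hp] at hle
  have := card_pos.2 ⟨p, hp⟩
  omega

section Configuration

@[reducible]
noncomputable def toHasLines (hS : IsLinearSpace N D) (hD : 1 < #D) (hND : #N ≤ #D) :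
    Configuration.HasLines N (Lines N D) where
  exists_point ℓ :=
    let ⟨p, hp, hpℓ⟩ := hS.exists_point_notMem hD ℓ.2
    ⟨⟨p, hp⟩, hpℓ⟩
  exists_line p :=
    let ⟨ℓ, hℓ, hpℓ⟩ := hS.exists_line_notMem hND p.2
    ⟨⟨ℓ, hℓ⟩, hpℓ⟩
  eq_or_eq {p q ℓ m} hpℓ hqℓ hpm hqm := (eq_or_ne p q).imp id fun hpq =>
    Subtype.ext (hS.eq_of_mem_of_mem ℓ.2 m.2 hpℓ hqℓ hpm hqm (Subtype.coe_ne_coe.2 hpq))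
  mkLine {p q} hpq :=
    ⟨_, (hS.existsUnique_line p p.2 q q.2 (Subtype.coe_ne_coe.2 hpq)).exists.choose_spec.1⟩
  mkLine_ax {p q} hpq :=
    (hS.existsUnique_line p p.2 q q.2 (Subtype.coe_ne_coe.2 hpq)).exists.choose_spec.2

theorem lineCount_eq (p : N) : Configuration.lineCount (Lines N D) p = #(D.filter (p.1 ∈ ·)) :=
  (Nat.card_congr (Equiv.subtypeSubtypeEquivSubtypeInter (· ∈ D) (p.1 ∈ ·))).trans
    (Nat.subtype_card _ fun _ => mem_filter)

theorem card_filter_mem_eq_card_of_notMem (hS : IsLinearSpace N D) (hD : 1 < #D)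
    (hDN : #D = #N) {p : α} {ℓ : Finset α} (hp : p ∈ N) (hℓ : ℓ ∈ D) (hpℓ : p ∉ ℓ) :
    #(D.filter (p ∈ ·)) = #ℓ := by
  let := hS.toHasLines hD hDN.ge
  rw [← lineCount_eq ⟨p, hp⟩, ← hS.pointCount_eq ⟨ℓ, hℓ⟩]
  exact Configuration.HasLines.lineCount_eq_pointCount (L := Lines N D) (p := ⟨p, hp⟩)
    (l := ⟨ℓ, hℓ⟩) (by simp [card_lines, hDN]) hpℓ

theorem exists_mem_mem_of_ne (hS : IsLinearSpace N D) (hD : 1 < #D) (hDN : #D = #N)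
    {ℓ m : Finset α} (hℓ : ℓ ∈ D) (hm : m ∈ D) (hℓm : ℓ ≠ m) : ∃ p, p ∈ ℓ ∧ p ∈ m := by
  let := hS.toHasLines hD hDN.ge
  let := Configuration.HasLines.hasPoints (P := N) (L := Lines N D) (by simp [card_lines, hDN])
  obtain ⟨p, hp⟩ := (Configuration.HasPoints.existsUnique_point N (Lines N D) ⟨ℓ, hℓ⟩ ⟨m, hm⟩
    fun h => hℓm (congrArg Subtype.val h)).exists
  exact ⟨p, hp⟩

end Configuration

theorem mem_or_mem_of_card_ne (hS : IsLinearSpace N D) (hD : 1 < #D) (hDN : #D = #N)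
    {ℓ m : Finset α} {p : α} (hℓ : ℓ ∈ D) (hm : m ∈ D) (hℓm : #ℓ ≠ #m) (hp : p ∈ N) :
    p ∈ ℓ ∨ p ∈ m := by
  by_contra! h
  exact hℓm ((hS.card_filter_mem_eq_card_of_notMem hD hDN hp hℓ h.1).symm.trans
    (hS.card_filter_mem_eq_card_of_notMem hD hDN hp hm h.2))

theorem card_le_two_of_subset_union (hS : IsLinearSpace N D) {ℓ m n : Finset α} (hℓ : ℓ ∈ D)
    (hm : m ∈ D) (hn : n ∈ D) (hnℓ : n ≠ ℓ) (hnm : n ≠ m) (hsub : n ⊆ ℓ ∪ m) : #n ≤ 2 := by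
  have hnℓ₁ := hS.card_inter_le_one hn hℓ hnℓ
  have hnm₁ := hS.card_inter_le_one hn hm hnm
  calc #n = #(n ∩ ℓ ∪ n ∩ m) := by rw [← inter_union_distrib_left, inter_eq_left.2 hsub]
    _ ≤ #(n ∩ ℓ) + #(n ∩ m) := card_union_le _ _
    _ ≤ 2 := by omega

theorem card_eq_two_of_card_lt (hS : IsLinearSpace N D) (hD : 1 < #D) (hDN : #D = #N)
    {ℓ m : Finset α} (hℓ : ℓ ∈ D) (hm : m ∈ D) (hlt : #m < #ℓ) : #m = 2 := by
  have hℓm : ℓ ≠ m := by rintro rfl; exact hlt.false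
  by_contra hm2
  have hm3 : 3 ≤ #m := by have := hS.two_le_card m hm; omega
  have hℓm₀ : 0 < #(ℓ \ m) := by have := hS.card_sub_one_le_card_sdiff hℓ hm hℓm; omega
  have hmℓ₁ : 1 < #(m \ ℓ) := by have := hS.card_sub_one_le_card_sdiff hm hℓ hℓm.symm; omega
  obtain ⟨p, hp⟩ := card_pos.1 hℓm₀
  obtain ⟨q, hq, q', hq', hqq'⟩ := one_lt_card.1 hmℓ₁
  rw [mem_sdiff] at hp hq hq'
  obtain ⟨n, ⟨hn, hpn, hqn⟩, -⟩ := hS.existsUnique_line p (hS.subset ℓ hℓ hp.1) q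
    (hS.subset m hm hq.1) (ne_of_mem_of_not_mem hp.1 hq.2)
  have hnℓ : n ≠ ℓ := by rintro rfl; exact hq.2 hqn
  have hnm : n ≠ m := by rintro rfl; exact hp.2 hpn
  have hq'n : q' ∉ n := fun hq'n => hnm (hS.eq_of_mem_of_mem hn hm hqn hq'n hq.1 hq'.1 hqq')
  have hn2 : #n ≤ 2 := hS.card_le_two_of_subset_union hℓ hm hn hnℓ hnm fun x hx =>
    mem_union.2 (hS.mem_or_mem_of_card_ne hD hDN hℓ hm hlt.ne' (hS.subset n hn hx))
  have hq'N := hS.subset m hm hq'.1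
  have := hS.card_filter_mem_eq_card_of_notMem hD hDN hq'N hn hq'n
  have := hS.card_filter_mem_eq_card_of_notMem hD hDN hq'N hℓ hq'.2
  omega

theorem isNearPencil_of_card_lt (hS : IsLinearSpace N D) (hD : 1 < #D) (hDN : #D = #N)
    {ℓ m : Finset α} (hℓ : ℓ ∈ D) (hm : m ∈ D) (hlt : #m < #ℓ) : IsNearPencil N D := by
  have hℓm : ℓ ≠ m := by rintro rfl; exact hlt.false
  have hcover : N = ℓ ∪ m := Subset.antisymm
    (fun p hp => mem_union.2 (hS.mem_or_mem_of_card_ne hD hDN hℓ hm hlt.ne' hp))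
    (union_subset (hS.subset ℓ hℓ) (hS.subset m hm))
  have hinter : #(ℓ ∩ m) = 1 := by
    obtain ⟨p, hpℓ, hpm⟩ := hS.exists_mem_mem_of_ne hD hDN hℓ hm hℓm
    exact le_antisymm (hS.card_inter_le_one hℓ hm hℓm) (card_pos.2 ⟨p, mem_inter.2 ⟨hpℓ, hpm⟩⟩)
  have hm2 := hS.card_eq_two_of_card_lt hD hDN hℓ hm hlt
  refine ⟨ℓ, hℓ, ?_, fun n hn hnℓ => ?_⟩
  · have := card_union_add_card_inter ℓ m
    rw [← hcover] at this
    omega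
  · rcases eq_or_ne n m with rfl | hnm
    · exact hm2
    · exact le_antisymm (hS.card_le_two_of_subset_union hℓ hm hn hnℓ hnm
        (hcover ▸ hS.subset n hn)) (hS.two_le_card n hn)

theorem isNearPencil_of_forall_card_eq_two (hS : IsLinearSpace N D) (hD : 1 < #D)
    (hDN : #D = #N) (h2 : ∀ ℓ ∈ D, #ℓ = 2) : IsNearPencil N D := by
  obtain ⟨ℓ, hℓ⟩ := card_pos.1 (by omega : 0 < #D)
  obtain ⟨p, hp, hpℓ⟩ := hS.exists_point_notMem hD hℓ
  have hsum : ∑ m ∈ D.filter (p ∈ ·), (#m - 1) = #(D.filter (p ∈ ·)) := by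
    rw [card_eq_sum_ones]
    exact sum_congr rfl fun m hm => by rw [h2 m (mem_filter.1 hm).1]
  have hN_le : #N ≤ 3 := by
    have := hS.card_erase_le_sum_card_sub_one hp
    rw [hsum, hS.card_filter_mem_eq_card_of_notMem hD hDN hp hℓ hpℓ, h2 ℓ hℓ,
      card_erase_of_mem hp] at this
    omega
  have hN_ge : 3 ≤ #N := by
    have := card_le_card (insert_subset hp (hS.subset ℓ hℓ))
    rwa [card_insert_of_notMem hpℓ, h2 ℓ hℓ] at this
  exact ⟨ℓ, hℓ, by rw [h2 ℓ hℓ]; omega, fun m hm _ => h2 m hm⟩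

theorem isProjectivePlaneOfOrder_of_forall_card_eq (hS : IsLinearSpace N D) (hD : 1 < #D)
    (hDN : #D = #N) {k : ℕ} (hk : 2 ≤ k) (hcard : ∀ ℓ ∈ D, #ℓ = k + 1) :
    IsProjectivePlaneOfOrder N D k :=
  ⟨hk, hcard, fun _ hp =>
    let ⟨ℓ, hℓ, hpℓ⟩ := hS.exists_line_notMem hDN.ge hp
    (hS.card_filter_mem_eq_card_of_notMem hD hDN hp hℓ hpℓ).trans (hcard ℓ hℓ)⟩

end IsLinearSpace

/-- **Equality case of the de Bruijn–Erdős theorem.** In a finite linear space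
`(N, D)` with `b = |D| > 1` and `b = v = |N|`, exactly one of the following
holds: either some line has exactly `v - 1` points and every other line has
exactly `2` points (a near-pencil), or there is an integer `k ≥ 2` such that
every line has exactly `k + 1` points and every point lies on exactly `k + 1`
lines (a projective plane of order `k`). -/
theorem deBruijn_erdos_equality_case {α : Type*} [DecidableEq α]
    (N : Finset α) (D : Finset (Finset α))
    (hsub : ∀ ℓ ∈ D, ℓ ⊆ N)
    (hcard : ∀ ℓ ∈ D, 2 ≤ ℓ.card)
    (hunique : ∀ p ∈ N, ∀ q ∈ N, p ≠ q → ∃! ℓ, ℓ ∈ D ∧ p ∈ ℓ ∧ q ∈ ℓ)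
    (hb : 1 < D.card) (heq : D.card = N.card) :
    Xor'
      (∃ ℓ ∈ D, ℓ.card = N.card - 1 ∧ ∀ ℓ' ∈ D, ℓ' ≠ ℓ → ℓ'.card = 2)
      (∃ k : ℕ, 2 ≤ k ∧ (∀ ℓ ∈ D, ℓ.card = k + 1) ∧
        ∀ p ∈ N, (D.filter (fun ℓ => p ∈ ℓ)).card = k + 1) := by
  have hS : IsLinearSpace N D := ⟨hsub, hcard, hunique⟩
  change Xor (IsNearPencil N D) (∃ k, IsProjectivePlaneOfOrder N D k)
  refine (xor_iff_or_and_not_and _ _).2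
    ⟨?_, fun ⟨hnp, _, hpp⟩ => hnp.not_isProjectivePlaneOfOrder hb hpp⟩
  by_cases hsame : ∀ ℓ ∈ D, ∀ m ∈ D, #ℓ = #m
  · obtain ⟨ℓ₀, hℓ₀⟩ := card_pos.1 (by omega : 0 < #D)
    have hall : ∀ ℓ ∈ D, #ℓ = #ℓ₀ := fun ℓ hℓ => hsame ℓ hℓ ℓ₀ hℓ₀
    rcases (hcard ℓ₀ hℓ₀).eq_or_lt with h2 | h3
    · exact .inl <| hS.isNearPencil_of_forall_card_eq_two hb heq fun ℓ hℓ => h2 ▸ hall ℓ hℓ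
    · exact .inr ⟨#ℓ₀ - 1, hS.isProjectivePlaneOfOrder_of_forall_card_eq hb heq (by omega)
        fun ℓ hℓ => by rw [hall ℓ hℓ]; omega⟩
  · push Not at hsame
    obtain ⟨ℓ, hℓ, m, hm, hℓm⟩ := hsame
    rcases hℓm.lt_or_gt with hlt | hlt
    · exact .inl <| hS.isNearPencil_of_card_lt hb heq hm hℓ hlt
    · exact .inl <| hS.isNearPencil_of_card_lt hb heq hℓ hm hlt
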